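/- Inversion formula for dual q-Krawtchouk polynomials: setting λ(x) = q^{−x} + c q^{x−N}, one has (q^{−x};q)_n (c q^{x−N};q)_n = (q^{−N};q)_n ∑_{m=0}^{n} (−1)^m [n choose m]_q q^{m(m−1)/2} K_m(λ(x); c, N | q), where K_m(λ(x); c, N | q) = {}_3φ_2(q^{−m}, q^{−x}, c q^{x−N}; q^{−N}, 0; q; q) = ∑_{j=0}^{m} ((q^{−m};q)_j (q^{−x};q)_j (cq^{x−N};q)_j / ((q^{−N};q)_j (q;q)_j)) q^j. The identity holds for all integers x with 0 ≤ x ≤ N; equivalently, it holds as an identity of polynomials in the variable λ = q^{−x} + c q^{x−N}, using that (q^{−x};q)_j (cq^{x−N};q)_j is a polynomial of degree j in λ. -/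

import Mathlib

open Finset

/-- q-shifted factorial. -/
noncomputable def qPoch (a q : ℂ) (n : ℕ) : ℂ :=
  ∏ k ∈ Finset.range n, (1 - a * q ^ k)

lemma qPoch_succ (a q : ℂ) (n : ℕ) : qPoch a q (n+1) = qPoch a q n * (1 - a * q ^ n) :=
  Finset.prod_range_succ _ _

lemma qPoch_zero (a q : ℂ) : qPoch a q 0 = 1 := rfl

-- triangular number lemmas
lemma tri_succ (k : ℕ) : (k+1) * ((k+1) - 1) / 2 = k * (k-1) / 2 + k := by
  rw [← Nat.choose_two_right, ← Nat.choose_two_right, Nat.choose_succ_succ]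
  simp [Nat.choose_one_right, Nat.add_comm]

lemma tri_two (j : ℕ) : 2 * (j * (j-1) / 2) = j * (j-1) := by
  cases j with
  | zero => simp
  | succ m =>
    have h : Even ((m+1) * m) := by
      have := Nat.even_mul_succ_self m
      rwa [mul_comm] at this
    simp only [Nat.add_sub_cancel]
    obtain ⟨t, ht⟩ := h
    rw [ht]; omega

lemma tri_add (j k : ℕ) : (j+k) * ((j+k)-1) / 2 = j*(j-1)/2 + k*(k-1)/2 + j*k := by
  induction k with
  | zero => simp
  | succ m ih =>
    have h1 : j + (m+1) = (j+m) + 1 := by ring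
    rw [h1, tri_succ, ih, tri_succ]
    ring


lemma qPoch_inv_pow_eq_zero {q : ℂ} (hq : q ≠ 0) {m j : ℕ} (h : m < j) :
    qPoch ((q ^ m)⁻¹) q j = 0 := by
  apply Finset.prod_eq_zero (Finset.mem_range.mpr h)
  rw [inv_mul_cancel₀ (pow_ne_zero m hq)]
  ring

lemma qPoch_inv_pow_formula {q : ℂ} (hq : q ≠ 0) (m : ℕ) :
    ∀ j, j ≤ m → qPoch ((q ^ m)⁻¹) q j * q ^ (m * j) * qPoch q q (m - j)
      = (-1) ^ j * q ^ (j * (j - 1) / 2) * qPoch q q m := by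
  intro j
  induction j with
  | zero => intro _; simp [qPoch_zero]
  | succ j ih =>
    intro hj
    have hjm : j ≤ m := by omega
    have h1 : m - j = (m - (j+1)) + 1 := by omega
    have h3 : q ^ (m * (j+1)) = q ^ (m*j) * q ^ m := by
      rw [show m*(j+1) = m*j + m by ring, pow_add]
    have hqq : q * q ^ (m - (j+1)) = q ^ (m - j) := by
      rw [show m - j = (m-(j+1))+1 by omega, pow_succ']
    have h2 : q ^ j * q ^ (m - j) = q ^ m := by
      rw [show m = j + (m-j) by omega, pow_add]
      rw [show j + (m-j) - j = m - j by omega]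
    have h4 : (1 - (q^m)⁻¹ * q^j) * q^m = -(q^j) * (1 - q * q^(m-(j+1))) := by
      rw [hqq]
      field_simp
      linear_combination -h2
    have key := ih hjm
    rw [h1, qPoch_succ] at key
    have htri : q ^ ((j+1) * ((j+1) - 1) / 2) = q ^ (j * (j-1)/2) * q ^ j := by
      rw [← pow_add, tri_succ]
    rw [qPoch_succ, h3, htri]
    linear_combination (-(q^j)) * key
      + (qPoch ((q^m)⁻¹) q j * q^(m*j) * qPoch q q (m-(j+1))) * h4

lemma gauss_alt_sum {q : ℂ} (M : ℕ) (hP : ∀ k, k ≤ M + 1 → qPoch q q k ≠ 0) :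
    ∑ k ∈ Finset.range (M + 2),
      (-1)^k * q^(k*(k-1)/2) * (qPoch q q (M+1) / (qPoch q q k * qPoch q q (M+1-k))) = 0 := by
  set t : ℕ → ℂ := fun k => (-1)^k * q^(k*(k-1)/2) *
    (qPoch q q (M+1) / (qPoch q q k * qPoch q q (M+1-k))) with ht
  set g : ℕ → ℂ := fun k => if k ≤ M then (-1)^k * q^(k*(k-1)/2 + k) *
    (qPoch q q M / (qPoch q q k * qPoch q q (M-k))) else 0 with hg
  have h0 : t 0 = g 0 := by
    simp only [ht, hg, if_pos (Nat.zero_le M)]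
    simp [qPoch_zero, div_self (hP (M+1) le_rfl), div_self (hP M (by omega))]
  have hstep : ∀ k, k < M + 1 → t (k+1) = g (k+1) - g k := by
    intro k hk
    by_cases hkM : k < M
    · -- interior Pascal case
      obtain ⟨d, hd⟩ : ∃ d, M = d + (k+1) := ⟨M - (k+1), by omega⟩
      subst hd
      simp only [ht, hg, if_pos (show k+1 ≤ d+(k+1) by omega),
        if_pos (show k ≤ d+(k+1) by omega),
        show d+(k+1)+1-(k+1) = d+1 by omega, show d+(k+1)-(k+1) = d by omega,
        show d+(k+1)-k = d+1 by omega, tri_succ]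
      have e1 : qPoch q q (d+(k+1)+1) = qPoch q q (d+k+1) * (1 - q * q^(d+k+1)) := by
        rw [show d+(k+1)+1 = (d+k+1)+1 by ring, qPoch_succ]
      have e2 : qPoch q q (d+1) = qPoch q q d * (1 - q * q^d) := by
        rw [qPoch_succ]
      have e3 : qPoch q q (k+1) = qPoch q q k * (1 - q * q^k) := by
        rw [qPoch_succ]
      have e4 : qPoch q q (d+(k+1)) = qPoch q q (d+k+1) := by rw [← Nat.add_assoc]
      have hk0 : qPoch q q k ≠ 0 := hP k (by omega)
      have hd0 : qPoch q q d ≠ 0 := hP d (by omega)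
      have hk1 : (1 - q * q^k) ≠ 0 := by
        intro h; exact hP (k+1) (by omega) (by rw [e3, h, mul_zero])
      have hd1 : (1 - q * q^d) ≠ 0 := by
        intro h; exact hP (d+1) (by omega) (by rw [e2, h, mul_zero])
      rw [e1, e2, e3, e4]
      field_simp
      ring
    · -- boundary case k = M
      have hkM' : k = M := by omega
      subst hkM'
      simp only [ht, hg, if_neg (show ¬ (k+1 ≤ k) by omega), if_pos (le_refl k),
        Nat.sub_self, Nat.add_sub_cancel, qPoch_zero, mul_one]
      rw [div_self (hP (k+1) le_rfl), div_self (hP k (by omega))]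
      rw [show (k+1) * k / 2 = k*(k-1)/2 + k by simpa using tri_succ k]
      ring
  calc ∑ k ∈ Finset.range (M + 2), t k
      = (∑ k ∈ Finset.range (M+1), t (k+1)) + t 0 := Finset.sum_range_succ' t (M+1)
    _ = (∑ k ∈ Finset.range (M+1), (g (k+1) - g k)) + g 0 := by
        rw [h0]
        congr 1
        exact Finset.sum_congr rfl (fun k hks => hstep k (Finset.mem_range.mp hks))
    _ = (g (M+1) - g 0) + g 0 := by rw [Finset.sum_range_sub]
    _ = 0 := by simp [hg, if_neg (show ¬ (M+1 ≤ M) by omega)]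

/-- Gaussian (q-binomial) coefficient. -/
noncomputable def qBinom (q : ℂ) (n k : ℕ) : ℂ :=
  qPoch q q n / (qPoch q q k * qPoch q q (n - k))

/-- Dual q-Krawtchouk polynomial `K_m(λ(x);c,N|q)`, evaluated at an integer `x`,
with `y = q^{−x}`, `z = c q^{x−N}`:
`K_m = ∑_j ((q^{−m};q)_j (q^{−x};q)_j (cq^{x−N};q)_j/((q^{−N};q)_j (q;q)_j)) q^j`. -/
noncomputable def dualQKrawtchouk (q c : ℂ) (N : ℕ) (x : ℕ) (m : ℕ) : ℂ :=
  ∑ j ∈ Finset.range (m + 1),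
    qPoch ((q ^ m)⁻¹) q j * qPoch ((q ^ x)⁻¹) q j * qPoch (c * q ^ x * (q ^ N)⁻¹) q j /
      (qPoch ((q ^ N)⁻¹) q j * qPoch q q j) * q ^ j

/-- inversion formula for dual q-Krawtchouk polynomials: for `0 ≤ x ≤ N`,
`(q^{−x};q)_n (cq^{x−N};q)_n = (q^{−N};q)_n ∑_m (−1)^m [n choose m]_q q^{m(m−1)/2} K_m`. -/
theorem dualQKrawtchouk_inversion (q c : ℂ) (N n x : ℕ)
    (hN : 1 ≤ N) (hnN : n ≤ N) (hx : x ≤ N) (hc : c ≠ 0)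
    (hq0 : q ≠ 0) (hq1 : ∀ j, 1 ≤ j → j ≤ n → q ^ j ≠ 1)
    (hqN : ∀ j, j ≤ n → qPoch ((q ^ N)⁻¹) q j ≠ 0) :
    qPoch ((q ^ x)⁻¹) q n * qPoch (c * q ^ x * (q ^ N)⁻¹) q n =
      qPoch ((q ^ N)⁻¹) q n * ∑ m ∈ Finset.range (n + 1),
        (-1) ^ m * qBinom q n m * q ^ (m * (m - 1) / 2) * dualQKrawtchouk q c N x m := by
  have hP : ∀ k, k ≤ n → qPoch q q k ≠ 0 := by
    intro k hk
    rw [qPoch]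
    apply Finset.prod_ne_zero_iff.mpr
    intro i hi h
    have hik : i < k := Finset.mem_range.mp hi
    exact hq1 (i+1) (by omega) (by omega)
      (by rw [pow_succ']; linear_combination -h)
  -- extend the inner sum of K_m to range (n+1)
  have hK : ∀ m, m ≤ n → dualQKrawtchouk q c N x m =
      ∑ j ∈ Finset.range (n+1),
        qPoch ((q ^ m)⁻¹) q j * qPoch ((q ^ x)⁻¹) q j * qPoch (c * q ^ x * (q ^ N)⁻¹) q j /
          (qPoch ((q ^ N)⁻¹) q j * qPoch q q j) * q ^ j := by
    intro m hm
    rw [dualQKrawtchouk]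
    apply Finset.sum_subset (Finset.range_subset_range.mpr (by omega))
    intro j _ hj
    have hmj : m < j := by
      simp only [Finset.mem_range, not_lt] at hj
      omega
    rw [qPoch_inv_pow_eq_zero hq0 hmj]
    simp
  
  -- inner alternating sum vanishes for j < n
  have hinner0 : ∀ j, j < n →
      (∑ m ∈ Finset.range (n+1),
        (-1) ^ m * qBinom q n m * q ^ (m * (m - 1) / 2) * qPoch ((q ^ m)⁻¹) q j) = 0 := by
    intro j hj
    set f : ℕ → ℂ := fun m =>
      (-1) ^ m * qBinom q n m * q ^ (m * (m - 1) / 2) * qPoch ((q ^ m)⁻¹) q j with hf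
    show ∑ m ∈ Finset.range (n+1), f m = 0
    rw [← Finset.sum_range_add_sum_Ico _ (show j ≤ n+1 by omega)]
    have h1 : ∑ m ∈ Finset.range j, f m = 0 := by
      apply Finset.sum_eq_zero
      intro m hm
      rw [hf]
      simp only []
      rw [qPoch_inv_pow_eq_zero hq0 (Finset.mem_range.mp hm), mul_zero]
    rw [h1, zero_add, Finset.sum_Ico_eq_sum_range]
    have hmul : ∀ k ∈ Finset.range (n+1-j), f (j+k) * q^j =
        (qPoch q q n / qPoch q q (n-j)) * ((-1)^k * q^(k*(k-1)/2) *
          (qPoch q q (n-j) / (qPoch q q k * qPoch q q (n-j-k)))) := by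
      intro k hk
      have hkn : k ≤ n - j := by
        have := Finset.mem_range.mp hk; omega
      have hform := qPoch_inv_pow_formula hq0 (j+k) j (Nat.le_add_right j k)
      rw [Nat.add_sub_cancel_left] at hform
      have hQ : qPoch ((q^(j+k))⁻¹) q j =
          (-1)^j * q^(j*(j-1)/2) * qPoch q q (j+k) / (q^((j+k)*j) * qPoch q q k) := by
        rw [eq_div_iff (mul_ne_zero (pow_ne_zero _ hq0) (hP k (by omega)))]
        linear_combination hform
      have hexp : q^((j+k)*((j+k)-1)/2) * q^(j*(j-1)/2) * q^j = q^(k*(k-1)/2) * q^((j+k)*j) := by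
        rw [← pow_add, ← pow_add, ← pow_add]
        congr 1
        have h1 := tri_add j k
        have h2 := tri_two j
        have h3 : j*(j-1) + j = j*j := by
          cases j with
          | zero => simp
          | succ m => simp only [Nat.add_sub_cancel]; ring
        have h4 : (j+k)*j = j*j + k*j := by ring
        linarith
      have hsign : ((-1:ℂ))^(j+k) * (-1)^j = (-1)^k := by
        rw [← pow_add, show j+k+j = 2*j+k by ring, pow_add, pow_mul]
        norm_num
      rw [hf]
      simp only []
      rw [hQ, qBinom, show n - (j+k) = n - j - k by omega]
      have hd1 : qPoch q q (j+k) ≠ 0 := hP _ (by omega)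
      have hd2 : qPoch q q (n-j-k) ≠ 0 := hP _ (by omega)
      have hd3 : qPoch q q k ≠ 0 := hP _ (by omega)
      have hd4 : qPoch q q (n-j) ≠ 0 := hP _ (by omega)
      have hd5 : (q:ℂ)^((j+k)*j) ≠ 0 := pow_ne_zero _ hq0
      have hone : ((-1:ℂ))^(j*2) = 1 := Even.neg_one_pow ⟨j, by ring⟩
      field_simp
      linear_combination
        (qPoch q q n
          * (-1)^k * (-1)^(j*2)) * hexp
        + (qPoch q q n
          * (-1)^k * q^(k*(k-1)/2) * q^((j+k)*j)) * hone
    have hzero : (∑ k ∈ Finset.range (n+1-j), f (j+k)) * q^j = 0 := by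
      rw [Finset.sum_mul, Finset.sum_congr rfl hmul, ← Finset.mul_sum]
      set M' := n - j - 1 with hM'
      rw [show n+1-j = M'+2 by omega, show n-j = M'+1 by omega]
      rw [gauss_alt_sum M' (fun k hk => hP k (by omega)), mul_zero]
    exact (mul_eq_zero.mp hzero).resolve_right (pow_ne_zero j hq0)
  
  -- inner sum at j = n
  have hinnern : (∑ m ∈ Finset.range (n+1),
      (-1) ^ m * qBinom q n m * q ^ (m * (m - 1) / 2) * qPoch ((q ^ m)⁻¹) q n) * q^n
      = qPoch q q n := by
    rw [Finset.sum_eq_single_of_mem n (Finset.self_mem_range_succ n)]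
    · have hform := qPoch_inv_pow_formula hq0 n n le_rfl
      rw [Nat.sub_self, qPoch_zero, mul_one] at hform
      have hQ : qPoch ((q^n)⁻¹) q n =
          (-1)^n * q^(n*(n-1)/2) * qPoch q q n / q^(n*n) := by
        rw [eq_div_iff (pow_ne_zero _ hq0)]
        linear_combination hform
      rw [hQ, qBinom, Nat.sub_self, qPoch_zero, mul_one, div_self (hP n le_rfl)]
      have hexp : q^(n*(n-1)/2) * q^(n*(n-1)/2) * q^n = q^(n*n) := by
        rw [← pow_add, ← pow_add]
        congr 1
        have h2 := tri_two n
        have h3 : n*(n-1) + n = n*n := by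
          cases n with
          | zero => simp
          | succ m => simp only [Nat.add_sub_cancel]; ring
        omega
      have hone : ((-1:ℂ))^(n*2) = 1 := Even.neg_one_pow ⟨n, by ring⟩
      field_simp
      linear_combination qPoch q q n * (-1)^(n*2) * hexp
        + (qPoch q q n * q^(n*n)) * hone
    · intro m hm hmn
      have : m < n := by
        have := Finset.mem_range.mp hm; omega
      rw [qPoch_inv_pow_eq_zero hq0 this, mul_zero]
  -- swap the double sum
  have hswap : ∑ m ∈ Finset.range (n + 1),
      (-1) ^ m * qBinom q n m * q ^ (m * (m - 1) / 2) * dualQKrawtchouk q c N x m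
      = ∑ j ∈ Finset.range (n+1),
        (qPoch ((q ^ x)⁻¹) q j * qPoch (c * q ^ x * (q ^ N)⁻¹) q j /
          (qPoch ((q ^ N)⁻¹) q j * qPoch q q j) * q ^ j) *
        (∑ m ∈ Finset.range (n+1),
          (-1) ^ m * qBinom q n m * q ^ (m * (m - 1) / 2) * qPoch ((q ^ m)⁻¹) q j) := by
    calc ∑ m ∈ Finset.range (n + 1),
        (-1) ^ m * qBinom q n m * q ^ (m * (m - 1) / 2) * dualQKrawtchouk q c N x m
        = ∑ m ∈ Finset.range (n + 1), ∑ j ∈ Finset.range (n+1),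
            (-1) ^ m * qBinom q n m * q ^ (m * (m - 1) / 2) *
            (qPoch ((q ^ m)⁻¹) q j * qPoch ((q ^ x)⁻¹) q j * qPoch (c * q ^ x * (q ^ N)⁻¹) q j /
              (qPoch ((q ^ N)⁻¹) q j * qPoch q q j) * q ^ j) := by
          refine Finset.sum_congr rfl fun m hm => ?_
          rw [hK m (by have := Finset.mem_range.mp hm; omega), Finset.mul_sum]
      _ = ∑ j ∈ Finset.range (n+1), ∑ m ∈ Finset.range (n+1),
            (-1) ^ m * qBinom q n m * q ^ (m * (m - 1) / 2) *
            (qPoch ((q ^ m)⁻¹) q j * qPoch ((q ^ x)⁻¹) q j * qPoch (c * q ^ x * (q ^ N)⁻¹) q j /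
              (qPoch ((q ^ N)⁻¹) q j * qPoch q q j) * q ^ j) := Finset.sum_comm
      _ = _ := by
          refine Finset.sum_congr rfl fun j hj => ?_
          rw [Finset.mul_sum]
          refine Finset.sum_congr rfl fun m hm => ?_
          ring
  rw [hswap]
  rw [Finset.sum_eq_single_of_mem n (Finset.self_mem_range_succ n)
    (fun j hj hjn => by rw [hinner0 j (by have := Finset.mem_range.mp hj; omega), mul_zero])]
  have hin : (∑ m ∈ Finset.range (n+1),
      (-1) ^ m * qBinom q n m * q ^ (m * (m - 1) / 2) * qPoch ((q ^ m)⁻¹) q n)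
      = qPoch q q n / q^n := by
    rw [eq_div_iff (pow_ne_zero _ hq0)]
    exact hinnern
  rw [hin]
  have hwn : qPoch ((q ^ N)⁻¹) q n ≠ 0 := hqN n le_rfl
  have hpn : qPoch q q n ≠ 0 := hP n le_rfl
  have h1 : (q:ℂ) ^ n * (q ^ n)⁻¹ = 1 := mul_inv_cancel₀ (pow_ne_zero _ hq0)
  have h2 : qPoch ((q ^ N)⁻¹) q n * (qPoch ((q ^ N)⁻¹) q n)⁻¹ = 1 := mul_inv_cancel₀ hwn
  have h3 : qPoch q q n * (qPoch q q n)⁻¹ = 1 := mul_inv_cancel₀ hpn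
  linear_combination
    (-(qPoch ((q^x)⁻¹) q n * qPoch (c*q^x*(q^N)⁻¹) q n * qPoch ((q^N)⁻¹) q n
      * (qPoch ((q^N)⁻¹) q n)⁻¹ * qPoch q q n * (qPoch q q n)⁻¹)) * h1
    + (-(qPoch ((q^x)⁻¹) q n * qPoch (c*q^x*(q^N)⁻¹) q n * qPoch q q n * (qPoch q q n)⁻¹)) * h2
    + (-(qPoch ((q^x)⁻¹) q n * qPoch (c*q^x*(q^N)⁻¹) q n)) * h3
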